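/- If a word p of length n over the positive integers has no immediate repetitions (no index i with p(i) = p(i+1)), then either p or the word p^{+1} obtained by adding 1 to every letter of p occurs as a subsequence of the first n runs of the infinite zigzag word. -/

import Mathlib

/-- Ascending run of odd letters `1,3,5,...` restricted to letters `≤ B`. -/
def ascRun (B : Nat) : List Nat := (List.range (B + 1)).filter (fun x => x % 2 == 1)

/-- Descending run of even letters `...,6,4,2` restricted to letters `≤ B`. -/
def descRun (B : Nat) : List Nat :=
  ((List.range (B + 1)).filter (fun x => x % 2 == 0 && x != 0)).reverse

/-- The first `n` runs of the infinite zigzag word, restricted to letters `≤ B`. -/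
def zigzag (B n : Nat) : List Nat :=
  (List.range n).flatMap (fun k => if k % 2 = 0 then ascRun B else descRun B)

/-!
Embed a word greedily into the zigzag word, letter by letter. If the last letter `y` sits in
run `k`, the next letter `x ≠ y` goes into the same run when it comes after `y` there
(cost 0), into run `k + 1` when its parity differs from that of `y` (cost 1), and into run
`k + 2` otherwise (cost 2). Shifting both letters by one swaps the direction of the run, so
the costs of a step for `p` and for `p⁺¹` add up to 2. The first letters of `p` and `p⁺¹`
go to runs 0 and 1, hence the greedy embeddings of `p` and `p⁺¹` end in runs adding up to
`2n - 1`, and one of them ends in a run `< n`.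
-/

theorem List.Pairwise.filter_le_append_singleton_sublist {α β : Type*} [LinearOrder β]
    {f : α → β} {l : List α} (hl : l.Pairwise (fun a b => f a < f b)) {a : β} {x : α}
    (hx : x ∈ l) (hax : a < f x) :
    (l.filter (fun z => f z ≤ a) ++ [x]).Sublist (l.filter (fun z => f z ≤ f x)) := by
  induction l with
  | nil => simp at hx
  | cons z l ih =>
    rw [List.pairwise_cons] at hl
    by_cases hza : f z ≤ a
    · have hxl : x ∈ l := by
        rcases List.mem_cons.mp hx with rfl | hxl
        · exact absurd hza (not_le.mpr hax)
        · exact hxl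
      rw [List.filter_cons_of_pos (by simpa using hza),
        List.filter_cons_of_pos (by simpa using hza.trans hax.le)]
      exact (ih hl.2 hxl).cons_cons z
    · have hnil : (z :: l).filter (fun w => f w ≤ a) = [] := by
        refine List.filter_eq_nil_iff.mpr fun w hw => ?_
        rcases List.mem_cons.mp hw with rfl | hw
        · simpa using hza
        · simpa using (not_le.mp hza).trans (hl.1 w hw)
      rw [hnil, List.nil_append, List.singleton_sublist]
      exact List.mem_filter.mpr ⟨hx, by simp⟩

namespace Zigzag

def run (B k : ℕ) : List ℕ := if k % 2 = 0 then ascRun B else descRun B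

/-- Order key of the letters inside run `k`: the run lists its letters by increasing key. -/
def runKey (k z : ℕ) : ℤ := if k % 2 = 0 then z else -z

theorem zigzag_succ (B n : ℕ) : zigzag B (n + 1) = zigzag B n ++ run B n := by
  simp [zigzag, List.range_succ, run]

theorem zigzag_sublist_zigzag (B : ℕ) {m n : ℕ} (h : m ≤ n) :
    (zigzag B m).Sublist (zigzag B n) := by
  induction n, h using Nat.le_induction with
  | base => exact List.Sublist.refl _
  | succ n _ ih => exact ih.trans (zigzag_succ B n ▸ List.sublist_append_left _ _)

theorem mem_run {B k x : ℕ} : x ∈ run B k ↔ 0 < x ∧ x ≤ B ∧ x % 2 ≠ k % 2 := by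
  by_cases hk : k % 2 = 0 <;>
    simp [run, ascRun, descRun, hk, List.mem_filter, List.mem_range] <;> omega

theorem pairwise_run (B k : ℕ) : (run B k).Pairwise (fun a b => runKey k a < runKey k b) := by
  have hsorted : (run B k).Pairwise (if k % 2 = 0 then (· < ·) else (· > ·)) := by
    by_cases hk : k % 2 = 0
    · simpa [run, ascRun, hk] using List.pairwise_lt_range.sublist List.filter_sublist
    · simpa [run, descRun, hk, List.pairwise_reverse] using
        List.pairwise_lt_range.sublist List.filter_sublist
  refine hsorted.imp fun {a b} hab => ?_
  by_cases hk : k % 2 = 0 <;> simp only [runKey, hk, if_true, if_false] at hab ⊢ <;> omega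

/-- `q` embeds into the first `k` runs followed by the part of run `k` up to its letter `y`. -/
def Emb (B : ℕ) (q : List ℕ) (k y : ℕ) : Prop :=
  y ∈ run B k ∧ q.Sublist (zigzag B k ++ (run B k).filter (fun z => runKey k z ≤ runKey k y))

theorem mem_filter_runKey_le_self {B k x : ℕ} (hx : x ∈ run B k) :
    x ∈ (run B k).filter (fun z => runKey k z ≤ runKey k x) :=
  List.mem_filter.mpr ⟨hx, by simp⟩

theorem Emb.singleton {B k x : ℕ} (hx : x ∈ run B k) : Emb B [x] k x :=
  ⟨hx, (List.nil_sublist _).append (List.singleton_sublist.mpr (mem_filter_runKey_le_self hx))⟩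

theorem Emb.sublist_zigzag {B q k y j} (h : Emb B q k y) (hkj : k < j) :
    q.Sublist (zigzag B j) :=
  h.2.trans <| ((List.Sublist.refl _).append List.filter_sublist).trans <|
    zigzag_succ B k ▸ zigzag_sublist_zigzag B hkj

theorem Emb.append_of_lt {B q k y j x} (h : Emb B q k y) (hkj : k < j) (hx : x ∈ run B j) :
    Emb B (q ++ [x]) j x :=
  ⟨hx, (h.sublist_zigzag hkj).append <|
    List.singleton_sublist.mpr (mem_filter_runKey_le_self hx)⟩

theorem Emb.append_of_runKey_lt {B q k y x} (h : Emb B q k y) (hx : x ∈ run B k)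
    (hyx : runKey k y < runKey k x) : Emb B (q ++ [x]) k x := by
  refine ⟨hx, ?_⟩
  have hfilter := (pairwise_run B k).filter_le_append_singleton_sublist hx hyx
  have hq := h.2.append (List.Sublist.refl [x])
  rw [List.append_assoc] at hq
  exact hq.trans ((List.Sublist.refl _).append hfilter)

/-- Number of runs the greedy embedding advances when the letter `x` follows the letter `y`
(the runs containing `y` have the parity of `y + 1`). -/
def cost (y x : ℕ) : ℕ :=
  if x % 2 ≠ y % 2 then 1 else if runKey (y + 1) y < runKey (y + 1) x then 0 else 2

theorem cost_add_cost_succ {y x : ℕ} (h : y ≠ x) : cost y x + cost (y + 1) (x + 1) = 2 := by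
  unfold cost runKey
  split_ifs <;> omega

def chainCost : ℕ → List ℕ → ℕ
  | _, [] => 0
  | y, x :: p => cost y x + chainCost x p

theorem chainCost_add_chainCost_map_succ {y : ℕ} {p : List ℕ}
    (h : (y :: p).IsChain (· ≠ ·)) :
    chainCost y p + chainCost (y + 1) (p.map (· + 1)) = 2 * p.length := by
  induction p generalizing y with
  | nil => rfl
  | cons x p ih =>
    obtain ⟨hyx, hp⟩ := List.isChain_cons_cons.mp h
    have := cost_add_cost_succ hyx
    simp only [chainCost, List.map_cons, List.length_cons]
    linarith [ih hp]

theorem Emb.append_cost {B q k y x} (h : Emb B q k y) (hx0 : 0 < x) (hxB : x ≤ B) :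
    Emb B (q ++ [x]) (k + cost y x) x := by
  have hy := mem_run.mp h.1
  have hkey : runKey k = runKey (y + 1) := by
    have : k % 2 = 0 ↔ (y + 1) % 2 = 0 := by omega
    funext z; simp only [runKey, this]
  unfold cost
  split_ifs with hpar hafter
  · exact h.append_of_lt (by omega) (mem_run.mpr ⟨hx0, hxB, by omega⟩)
  · exact h.append_of_runKey_lt (mem_run.mpr ⟨hx0, hxB, by omega⟩) (hkey ▸ hafter)
  · exact h.append_of_lt (by omega) (mem_run.mpr ⟨hx0, hxB, by omega⟩)

theorem Emb.exists_append {B q k y} {p : List ℕ} (h : Emb B q k y)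
    (hp : ∀ x ∈ p, 0 < x ∧ x ≤ B) :
    ∃ z, Emb B (q ++ p) (k + chainCost y p) z := by
  induction p generalizing q k y with
  | nil => exact ⟨y, by simpa [chainCost] using h⟩
  | cons x p ih =>
    obtain ⟨hx0, hxB⟩ := hp x List.mem_cons_self
    obtain ⟨z, hz⟩ := ih (h.append_cost hx0 hxB) fun a ha => hp a (List.mem_cons_of_mem x ha)
    refine ⟨z, ?_⟩
    rwa [chainCost, ← add_assoc, ← List.singleton_append, ← List.append_assoc]

end Zigzag

open Zigzag in
theorem zigzag_embeds_words_without_repetitions (n : Nat) (p : List Nat)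
    (hlen : p.length = n) (hpos : ∀ x ∈ p, 0 < x)
    (hnorep : List.Chain' (· ≠ ·) p) :
    (∃ B, List.Sublist p (zigzag B n)) ∨
      (∃ B, List.Sublist (p.map (· + 1)) (zigzag B n)) := by
  rcases p with _ | ⟨x, rest⟩
  · exact Or.inl ⟨0, List.nil_sublist _⟩
  set B := (x :: rest).sum + 1
  have hbound : ∀ z ∈ x :: rest, 0 < z ∧ z + 1 ≤ B :=
    fun z hz => ⟨hpos z hz, by have := List.le_sum_of_mem hz; omega⟩
  have hrest : ∀ a ∈ rest, 0 < a ∧ a + 1 ≤ B :=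
    fun a ha => hbound a (List.mem_cons_of_mem x ha)
  have hx := hbound x List.mem_cons_self
  have hstart : Emb B [x] ((x + 1) % 2) x :=
    Emb.singleton (mem_run.mpr ⟨hx.1, by omega, by omega⟩)
  have hstart' : Emb B [x + 1] (x % 2) (x + 1) :=
    Emb.singleton (mem_run.mpr ⟨by omega, hx.2, by omega⟩)
  obtain ⟨z, hp⟩ := hstart.exists_append (p := rest)
    fun a ha => ⟨(hrest a ha).1, Nat.le_of_succ_le (hrest a ha).2⟩
  obtain ⟨z', hp'⟩ := hstart'.exists_append (p := rest.map (· + 1))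
    (List.forall_mem_map.mpr fun a ha => ⟨a.succ_pos, (hrest a ha).2⟩)
  have hsum := chainCost_add_chainCost_map_succ hnorep
  have hn : n = rest.length + 1 := by simpa using hlen.symm
  rcases le_total ((x + 1) % 2 + chainCost x rest) (x % 2 + chainCost (x + 1) (rest.map (· + 1)))
    with hle | hle
  · exact Or.inl ⟨B, hp.sublist_zigzag (by omega)⟩
  · exact Or.inr ⟨B, hp'.sublist_zigzag (by omega)⟩
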